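/- arXiv:1604.06499 — 3 statements merged into one kernel-verified Lean document; each statement's English description precedes it below -/
import Mathlib

section
/- Let L be a full-rank lattice in ℝ³ that is preserved by every element of the octahedral group [3,4], i.e. by every signed permutation matrix. Then there exists a nonzero real number a such that a⁻¹L ∈ {Λ₍₁,₀,₀₎, Λ₍₁,₁,₁₎, Λ₍₁,₁,₀₎}. -/
noncomputable section

/-- `ℝ³`, as the space of triples of reals. -/
abbrev V3 := Fin 3 → ℝ

/-- A full-rank lattice in `ℝ³`. -/
def IsFullLattice (L : AddSubgroup V3) : Prop :=
  ∃ b : Module.Basis (Fin 3) ℝ V3,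
    ∀ x, x ∈ L ↔ ∃ c : Fin 3 → ℤ, x = ∑ i, (c i : ℝ) • b i

/-- `f` is the action of a signed permutation matrix: `(f x) i = ε i * x (σ i)` where
`σ` is a permutation of the coordinates and each `ε i` is `1` or `-1`.  The group of all
such maps is the octahedral group `[3,4] ≤ O(3)`. -/
def IsSignedPerm (f : V3 → V3) : Prop :=
  ∃ (σ : Equiv.Perm (Fin 3)) (ε : Fin 3 → ℝ),
    (∀ i, ε i = 1 ∨ ε i = -1) ∧ ∀ x i, f x i = ε i * x (σ i)

/-- The cubic lattice `Λ₍₁,₀,₀₎ = ℤ³`. -/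
def cubicLattice : Set V3 := {x | ∃ c : Fin 3 → ℤ, ∀ i, x i = c i}

/-- The body-centred cubic lattice `Λ₍₁,₁,₁₎`: integer vectors whose three coordinates
all have the same parity. -/
def bccLattice : Set V3 :=
  {x | ∃ c : Fin 3 → ℤ, (∀ i, x i = c i) ∧ ∀ i j, c i % 2 = c j % 2}

/-- The face-centred cubic lattice `Λ₍₁,₁,₀₎`: integer vectors whose coordinate sum is even. -/
def fccLattice : Set V3 :=
  {x | ∃ c : Fin 3 → ℤ, (∀ i, x i = c i) ∧ 2 ∣ (c 0 + c 1 + c 2)}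

/-!
Adding `x ∈ L` to its reflection in the coordinate planes through the `i`-th axis gives
`2 xᵢ eᵢ ∈ L`, so every coordinate axis meets `L` in a nontrivial subgroup; it is cyclic because
`L` is discrete, and it is the same for all axes by symmetry: `L ∩ ℝ eᵢ = ℤ c eᵢ`. With `a = c / 2`
the lattice `N = a⁻¹ L` then satisfies `2ℤ³ ⊆ N ⊆ ℤ³` and `eᵢ ∉ N`, so it is determined by the
parities of its vectors. Since `n - n ∘ (i j) = (nᵢ - nⱼ) (eᵢ - eⱼ)`, either `e₀ - e₁ ∈ N` and
`N` is the face-centred lattice, or the coordinates of each `n ∈ N` all have the same parity, and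
`N` is the body-centred lattice or `2ℤ³` according as `(1, 1, 1)` lies in `N` or not.
-/

theorem AddSubgroup.zsmul_mem_iff_even {G : Type*} [AddGroup G] {H : AddSubgroup G} {w : G}
    (hw : w ∉ H) (h2w : (2 : ℤ) • w ∈ H) (k : ℤ) : k • w ∈ H ↔ Even k := by
  obtain ⟨m, rfl | rfl⟩ := Int.even_or_odd' k <;>
    have hm : (2 * m) • w ∈ H := by simpa [mul_comm 2 m, mul_zsmul] using H.zsmul_mem h2w m
  · exact iff_of_true hm (even_two_mul m)
  · rw [add_zsmul, one_zsmul, H.add_mem_cancel_left hm]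
    exact iff_of_false hw (Int.not_even_two_mul_add_one m)

theorem Module.Basis.exists_smul_mem_iff_mem_zmultiples {ι E : Type*} [AddCommGroup E]
    [Module ℝ E] (b : Module.Basis ι ℝ E) {L : AddSubgroup E}
    (hL : ∀ x ∈ L, ∀ i, ∃ n : ℤ, b.repr x i = n)
    {v : E} (hv : v ≠ 0) : ∃ c : ℝ, ∀ t : ℝ, t • v ∈ L ↔ t ∈ AddSubgroup.zmultiples c := by
  obtain ⟨j, hj⟩ : ∃ j, b.repr v j ≠ 0 := by
    by_contra! h
    exact hv (b.repr.map_eq_zero_iff.1 (Finsupp.ext h))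
  let S : AddSubgroup ℝ := L.comap (LinearMap.toSpanSingleton ℝ E v).toAddMonoidHom
  have hS : S ≤ AddSubgroup.zmultiples (b.repr v j)⁻¹ := by
    intro t ht
    obtain ⟨n, hn⟩ := hL _ ht j
    refine AddSubgroup.mem_zmultiples_iff.2 ⟨n, ?_⟩
    simp only [LinearMap.toAddMonoidHom_coe, LinearMap.toSpanSingleton_apply, map_smul,
      Finsupp.coe_smul, Pi.smul_apply, smul_eq_mul] at hn
    rw [zsmul_eq_mul, ← hn]
    field_simp
  obtain ⟨m, hm⟩ := (AddSubgroup.le_zmultiples_iff _ S).1 hS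
  exact ⟨m • (b.repr v j)⁻¹, fun t => SetLike.ext_iff.1 hm t⟩

section IntVectors

variable {ι : Type*} [DecidableEq ι] {N : AddSubgroup (ι → ℤ)}

theorem zsmul_mem_of_single_mem [Fintype ι] {k : ℤ} (h : ∀ i, Pi.single i k ∈ N) (m : ι → ℤ) :
    k • m ∈ N := by
  have : k • m = ∑ i, m i • Pi.single i k := by
    ext j
    simp [Finset.sum_apply, Pi.single_apply, mul_comm]
  rw [this]
  exact N.sum_mem fun i _ => N.zsmul_mem (h i) _

theorem mem_of_even [Fintype ι] (htwo : ∀ i, Pi.single i 2 ∈ N) {n : ι → ℤ} (hn : Even n) :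
    n ∈ N := by
  obtain ⟨m, rfl⟩ := hn
  rw [← two_zsmul]
  exact zsmul_mem_of_single_mem htwo m

theorem even_sub_of_mem_of_sub_single_notMem (i j : ι) (hswap : ∀ n ∈ N, n ∘ Equiv.swap i j ∈ N)
    (htwo : ∀ i, Pi.single i 2 ∈ N) (hd : Pi.single i 1 - Pi.single j 1 ∉ N)
    {n : ι → ℤ} (hn : n ∈ N) : Even (n i - n j) := by
  have hsub : n - n ∘ Equiv.swap i j = (n i - n j) • (Pi.single i 1 - Pi.single j 1) := by
    ext k
    simp only [Pi.sub_apply, Function.comp_apply, Pi.smul_apply, smul_eq_mul, Pi.single_apply,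
      Equiv.swap_apply_def]
    split_ifs <;> subst_vars <;> ring
  rw [← AddSubgroup.zsmul_mem_iff_even hd, ← hsub]
  · exact N.sub_mem hn (hswap n hn)
  · simpa [smul_sub, ← Pi.single_smul'] using N.sub_mem (htwo i) (htwo j)

end IntVectors

theorem even_or_even_sub_one_of_emod_two_eq {n : Fin 3 → ℤ}
    (h : ∀ i j, n i % 2 = n j % 2) : Even n ∨ Even (n - 1) := by
  rcases Int.emod_two_eq (n 0) with h0 | h0
  · refine .inl ⟨fun i => n i / 2, funext fun i => ?_⟩
    have := h i 0
    simp only [Pi.add_apply]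
    omega
  · refine .inr ⟨fun i => n i / 2, funext fun i => ?_⟩
    have := h i 0
    simp only [Pi.add_apply, Pi.sub_apply, Pi.one_apply]
    omega

def latticeCoords {ι : Type*} (L : AddSubgroup (ι → ℝ)) (a : ℝ) : AddSubgroup (ι → ℤ) :=
  L.comap ((DistribSMul.toAddMonoidHom (ι → ℝ) a).comp
    (AddMonoidHom.compLeft (Int.castAddHom ℝ) ι))

section latticeCoords

variable {ι : Type*} {L : AddSubgroup (ι → ℝ)} {a : ℝ}

theorem mem_latticeCoords {n : ι → ℤ} :
    n ∈ latticeCoords L a ↔ (a • fun i => (n i : ℝ)) ∈ L :=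
  Iff.rfl

theorem image_inv_smul_eq_latticeCoords (ha : a ≠ 0)
    (hLa : ∀ x ∈ L, ∃ n : ι → ℤ, x = a • fun i => (n i : ℝ)) :
    (fun x => a⁻¹ • x) '' (L : Set (ι → ℝ)) =
      {x | ∃ n : ι → ℤ, (∀ i, x i = (n i : ℝ)) ∧ n ∈ latticeCoords L a} := by
  ext y
  constructor
  · rintro ⟨x, hx, rfl⟩
    obtain ⟨n, rfl⟩ := hLa x hx
    exact ⟨n, fun i => by simp [inv_mul_cancel_left₀ ha], hx⟩
  · rintro ⟨n, hyn, hn⟩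
    refine ⟨a • fun i => (n i : ℝ), hn, ?_⟩
    simp only [inv_smul_smul₀ ha]
    exact funext fun i => (hyn i).symm

end latticeCoords

def IsOctahedralInvariant (L : AddSubgroup V3) : Prop :=
  ∀ f : V3 → V3, IsSignedPerm f → f '' (L : Set V3) = (L : Set V3)

namespace IsOctahedralInvariant

variable {L : AddSubgroup V3} {x : V3}

theorem map_mem (hL : IsOctahedralInvariant L) {f : V3 → V3} (hf : IsSignedPerm f)
    (hx : x ∈ L) : f x ∈ L :=
  (Set.ext_iff.1 (hL f hf) (f x)).1 ⟨x, hx, rfl⟩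

theorem comp_mem (hL : IsOctahedralInvariant L) (σ : Equiv.Perm (Fin 3)) (hx : x ∈ L) :
    x ∘ σ ∈ L :=
  hL.map_mem ⟨σ, fun _ => 1, fun _ => Or.inl rfl, fun _ _ => (one_mul _).symm⟩ hx

theorem single_mem (hL : IsOctahedralInvariant L) (hx : x ∈ L) (i : Fin 3) :
    Pi.single i (2 * x i) ∈ L := by
  let ε : Fin 3 → ℝ := fun j => if j = i then 1 else -1
  have hflip : (fun j => ε j * x j) ∈ L :=
    hL.map_mem ⟨1, ε, fun j => by by_cases h : j = i <;> simp [ε, h], fun _ _ => rfl⟩ hx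
  convert L.add_mem hx hflip using 1
  ext j
  by_cases h : j = i <;> simp [ε, h]
  ring

theorem single_mem_iff (hL : IsOctahedralInvariant L) (i j : Fin 3) (t : ℝ) :
    Pi.single i t ∈ L ↔ Pi.single j t ∈ L := by
  suffices ∀ i j, Pi.single i t ∈ L → Pi.single j t ∈ L from ⟨this i j, this j i⟩
  intro i j h
  simpa [Pi.single_comp_equiv] using hL.comp_mem (Equiv.swap i j) h

end IsOctahedralInvariant

theorem IsFullLattice.exists_single_mem_iff {L : AddSubgroup V3} (hfull : IsFullLattice L)
    (hL : IsOctahedralInvariant L) :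
    ∃ c : ℝ, c ≠ 0 ∧ ∀ i t, Pi.single i t ∈ L ↔ t ∈ AddSubgroup.zmultiples c := by
  obtain ⟨b, hb⟩ := hfull
  have hint : ∀ x ∈ L, ∀ i, ∃ n : ℤ, b.repr x i = n := by
    intro x hx i
    obtain ⟨n, rfl⟩ := (hb x).1 hx
    exact ⟨n i, congrFun (b.repr_sum_self _) i⟩
  obtain ⟨c, hc⟩ := b.exists_smul_mem_iff_mem_zmultiples hint (v := Pi.single 0 1) (by simp)
  have hsingle : ∀ i t, Pi.single i t ∈ L ↔ t ∈ AddSubgroup.zmultiples c := fun i t => by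
    rw [hL.single_mem_iff i 0, ← hc, ← Pi.single_smul', smul_eq_mul, mul_one]
  refine ⟨c, ?_, hsingle⟩
  rintro rfl
  have hb0 : b 0 ∈ L := (hb _).2 ⟨Pi.single 0 1, by simp [Pi.single_apply]⟩
  obtain ⟨j, hj⟩ := Function.ne_iff.1 (b.ne_zero 0)
  have := (hsingle j _).1 (hL.single_mem hb0 j)
  rw [AddSubgroup.zmultiples_zero_eq_bot, AddSubgroup.mem_bot] at this
  exact hj (by simpa using this)

section InvariantLattice

variable {L : AddSubgroup V3} {c : ℝ}

theorem IsOctahedralInvariant.comp_mem_latticeCoords (hL : IsOctahedralInvariant L) (a : ℝ)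
    (σ : Equiv.Perm (Fin 3)) {n : Fin 3 → ℤ} (hn : n ∈ latticeCoords L a) :
    n ∘ σ ∈ latticeCoords L a :=
  hL.comp_mem σ hn

theorem single_mem_latticeCoords_iff
    (hc : ∀ i t, Pi.single i t ∈ L ↔ t ∈ AddSubgroup.zmultiples c) (a : ℝ) (i : Fin 3) (k : ℤ) :
    Pi.single i k ∈ latticeCoords L a ↔ a * k ∈ AddSubgroup.zmultiples c := by
  rw [mem_latticeCoords, ← hc i]
  congr!
  ext j
  by_cases h : j = i <;> simp [Pi.single_apply, h]

theorem latticeCoords_eq_top (hc : ∀ i t, Pi.single i t ∈ L ↔ t ∈ AddSubgroup.zmultiples c) :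
    latticeCoords L c = ⊤ :=
  eq_top_iff.2 fun n _ => by
    simpa using zsmul_mem_of_single_mem (k := 1)
      (fun i => (single_mem_latticeCoords_iff hc c i 1).2 (by simp)) n

theorem single_two_mem_latticeCoords
    (hc : ∀ i t, Pi.single i t ∈ L ↔ t ∈ AddSubgroup.zmultiples c) (i : Fin 3) :
    Pi.single i 2 ∈ latticeCoords L (c / 2) :=
  (single_mem_latticeCoords_iff hc _ i 2).2 (by simp)

theorem single_one_notMem_latticeCoords
    (hc : ∀ i t, Pi.single i t ∈ L ↔ t ∈ AddSubgroup.zmultiples c) (hc0 : c ≠ 0) (i : Fin 3) :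
    Pi.single i 1 ∉ latticeCoords L (c / 2) := by
  rw [single_mem_latticeCoords_iff hc _ i 1, AddSubgroup.mem_zmultiples_iff]
  rintro ⟨k, hk⟩
  rw [zsmul_eq_mul] at hk
  have : (2 * k : ℝ) = 1 := by
    apply mul_right_cancel₀ hc0
    linarith
  have : 2 * k = 1 := by exact_mod_cast this
  omega

theorem IsOctahedralInvariant.exists_eq_half_smul (hL : IsOctahedralInvariant L)
    (hc : ∀ i t, Pi.single i t ∈ L ↔ t ∈ AddSubgroup.zmultiples c) {x : V3} (hx : x ∈ L) :
    ∃ n : Fin 3 → ℤ, x = (c / 2) • fun i => (n i : ℝ) := by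
  have := fun i => AddSubgroup.mem_zmultiples_iff.1 ((hc i _).1 (hL.single_mem hx i))
  choose n hn using this
  refine ⟨n, funext fun i => ?_⟩
  have := hn i
  rw [zsmul_eq_mul] at this
  simp only [Pi.smul_apply, smul_eq_mul]
  linarith

end InvariantLattice

section ParityClasses

variable {N : AddSubgroup (Fin 3 → ℤ)}

theorem emod_two_eq_of_mem (hperm : ∀ σ : Equiv.Perm (Fin 3), ∀ n ∈ N, n ∘ σ ∈ N)
    (htwo : ∀ i, Pi.single i 2 ∈ N) (hd : Pi.single 0 1 - Pi.single 1 1 ∉ N)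
    {n : Fin 3 → ℤ} (hn : n ∈ N) (i j : Fin 3) : n i % 2 = n j % 2 := by
  have h01 := even_sub_of_mem_of_sub_single_notMem 0 1 (hperm _) htwo hd hn
  have h12 : Even (n 1 - n 2) := by
    simpa using
      even_sub_of_mem_of_sub_single_notMem 0 1 (hperm _) htwo hd (hperm (finRotate 3) n hn)
  obtain ⟨r, hr⟩ := h01
  obtain ⟨s, hs⟩ := h12
  fin_cases i <;> fin_cases j <;> simp <;> omega

theorem mem_iff_two_dvd_sum (hperm : ∀ σ : Equiv.Perm (Fin 3), ∀ n ∈ N, n ∘ σ ∈ N)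
    (htwo : ∀ i, Pi.single i 2 ∈ N) (hone : Pi.single 2 1 ∉ N)
    (hd : Pi.single 0 1 - Pi.single 1 1 ∈ N) (n : Fin 3 → ℤ) :
    n ∈ N ↔ 2 ∣ n 0 + n 1 + n 2 := by
  have hd' : Pi.single 1 1 - Pi.single 2 1 ∈ N := by
    convert hperm (finRotate 3).symm _ hd using 1
    ext k
    fin_cases k <;> rfl
  have hn : n = n 0 • (Pi.single 0 1 - Pi.single 1 1)
      + (n 0 + n 1) • (Pi.single 1 1 - Pi.single 2 1) + (n 0 + n 1 + n 2) • Pi.single 2 1 := by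
    ext k
    fin_cases k <;> simp
    ring
  have h2 : (2 : ℤ) • Pi.single (2 : Fin 3) (1 : ℤ) ∈ N := by simpa [← Pi.single_smul'] using htwo 2
  rw [← even_iff_two_dvd, ← AddSubgroup.zsmul_mem_iff_even hone h2]
  conv_lhs => rw [hn]
  exact N.add_mem_cancel_left (N.add_mem (N.zsmul_mem hd _) (N.zsmul_mem hd' _))

theorem mem_iff_emod_two_eq (hperm : ∀ σ : Equiv.Perm (Fin 3), ∀ n ∈ N, n ∘ σ ∈ N)
    (htwo : ∀ i, Pi.single i 2 ∈ N) (hd : Pi.single 0 1 - Pi.single 1 1 ∉ N) (h1 : 1 ∈ N)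
    (n : Fin 3 → ℤ) : n ∈ N ↔ ∀ i j, n i % 2 = n j % 2 := by
  refine ⟨emod_two_eq_of_mem hperm htwo hd, fun h => ?_⟩
  rcases even_or_even_sub_one_of_emod_two_eq h with h | h
  · exact mem_of_even htwo h
  · simpa using N.add_mem (mem_of_even htwo h) h1

theorem even_of_mem (hperm : ∀ σ : Equiv.Perm (Fin 3), ∀ n ∈ N, n ∘ σ ∈ N)
    (htwo : ∀ i, Pi.single i 2 ∈ N) (hd : Pi.single 0 1 - Pi.single 1 1 ∉ N) (h1 : 1 ∉ N)
    {n : Fin 3 → ℤ} (hn : n ∈ N) : Even n :=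
  (even_or_even_sub_one_of_emod_two_eq (emod_two_eq_of_mem hperm htwo hd hn)).resolve_right
    fun h => h1 (by simpa using N.sub_mem hn (mem_of_even htwo h))

theorem parity_trichotomy (hperm : ∀ σ : Equiv.Perm (Fin 3), ∀ n ∈ N, n ∘ σ ∈ N)
    (htwo : ∀ i, Pi.single i 2 ∈ N) (hone : ∀ i, Pi.single i 1 ∉ N) :
    (∀ n ∈ N, Even n) ∨ (∀ n, n ∈ N ↔ ∀ i j, n i % 2 = n j % 2) ∨
      (∀ n, n ∈ N ↔ 2 ∣ n 0 + n 1 + n 2) := by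
  by_cases hd : Pi.single 0 1 - Pi.single 1 1 ∈ N
  · exact .inr (.inr (mem_iff_two_dvd_sum hperm htwo (hone 2) hd))
  by_cases h1 : 1 ∈ N
  · exact .inr (.inl (mem_iff_emod_two_eq hperm htwo hd h1))
  · exact .inl fun n hn => even_of_mem hperm htwo hd h1 hn

end ParityClasses

/-- A full-rank lattice in `ℝ³` preserved by every signed permutation
matrix (the octahedral group `[3,4]`) is, up to a nonzero scalar, one of the cubic,
body-centred cubic or face-centred cubic lattices. -/
theorem statement8 (L : AddSubgroup V3) (hL : IsFullLattice L)
    (hpres : ∀ f : V3 → V3, IsSignedPerm f → f '' (L : Set V3) = (L : Set V3)) :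
    ∃ a : ℝ, a ≠ 0 ∧
      (fun x : V3 => a⁻¹ • x) '' (L : Set V3) ∈
        ({cubicLattice, bccLattice, fccLattice} : Set (Set V3)) := by
  have hinv : IsOctahedralInvariant L := hpres
  obtain ⟨c, hc0, hc⟩ := hL.exists_single_mem_iff hinv
  have hhalf : ∀ x ∈ L, ∃ n : Fin 3 → ℤ, x = (c / 2) • fun i => (n i : ℝ) :=
    fun x hx => hinv.exists_eq_half_smul hc hx
  rcases parity_trichotomy (hinv.comp_mem_latticeCoords (c / 2)) (single_two_mem_latticeCoords hc)
    (single_one_notMem_latticeCoords hc hc0) with hcub | hbcc | hfcc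
  · refine ⟨c, hc0, Or.inl ?_⟩
    rw [image_inv_smul_eq_latticeCoords hc0]
    · simp [latticeCoords_eq_top hc, cubicLattice]
    · intro x hx
      obtain ⟨n, rfl⟩ := hhalf x hx
      obtain ⟨m, rfl⟩ := hcub n hx
      exact ⟨m, by ext; simp; ring⟩
  · refine ⟨c / 2, div_ne_zero hc0 two_ne_zero, Or.inr (Or.inl ?_)⟩
    rw [image_inv_smul_eq_latticeCoords (div_ne_zero hc0 two_ne_zero) hhalf]
    simp_rw [hbcc]
    rfl
  · refine ⟨c / 2, div_ne_zero hc0 two_ne_zero, Or.inr (Or.inr ?_)⟩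
    rw [image_inv_smul_eq_latticeCoords (div_ne_zero hc0 two_ne_zero) hhalf]
    simp_rw [hfcc]
    rfl

end
end

section
/- Let L be a full-rank lattice in ℝ³ that is preserved by both the reflection in the plane x = 0 and the reflection in the plane y = 0 (the group D̃₂). Then there exists an invertible diagonal linear map D of ℝ³ such that D⁻¹(L) is one of the following six lattices: Λ₍₁,₀,₀₎ = ℤ³; Λ₍₁,₁,₁₎ (body-centred cubic); Λ₍₁,₁,₀₎ (face-centred cubic); the lattice ℤ(1,1,0) + ℤ(1,−1,0) + ℤ(0,0,1); the lattice ℤ(2,0,0) + ℤ(0,2,0) + ℤ(1,0,1); and the lattice ℤ(2,0,0) + ℤ(0,2,0) + ℤ(0,1,1). -/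
/-! Subtracting a lattice vector from its mirror images shows that `2 v_i e_i ∈ L` for
every `v ∈ L`; as `L` is discrete, `L ∩ ℝ e_i = ℤ a_i e_i` with `a_i ≠ 0`. Hence, with
`M = ⊕ ℤ a_i e_i`, we have `M ⊆ L ⊆ ½ M`, so after rescaling by `a / 2` the lattice `L`
becomes a lattice `K` with `2ℤ³ ⊆ K ⊆ ℤ³` that misses the unit vectors. Such a `K` is the
preimage of its set of parity patterns, a subgroup of `(ℤ/2)³` avoiding the three unit
vectors, and there are exactly six of those. -/

noncomputable section

/-- The lattice generated by three given vectors. -/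
def latticeOf (v₁ v₂ v₃ : V3) : Set V3 :=
  {x | ∃ a b c : ℤ, x = a • v₁ + b • v₂ + c • v₃}

structure IsParityLattice (K : AddSubgroup (Fin 3 → ℤ)) : Prop where
  mem_of_even : ∀ c : Fin 3 → ℤ, (∀ i, c i % 2 = 0) → c ∈ K
  single_not_mem : ∀ i, Pi.single i 1 ∉ K

namespace IsParityLattice

variable {K : AddSubgroup (Fin 3 → ℤ)}

lemma mem_of_emod_two_eq (hK : IsParityLattice K) {c c' : Fin 3 → ℤ} (hc : c ∈ K)
    (h : ∀ i, c' i % 2 = c i % 2) : c' ∈ K := by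
  simpa using add_mem hc (hK.mem_of_even (c' - c) fun i => by simp [Int.sub_emod, h i])

lemma mem_iff_emod_two_mem (hK : IsParityLattice K) (c : Fin 3 → ℤ) :
    c ∈ K ↔ ![c 0 % 2, c 1 % 2, c 2 % 2] ∈ K :=
  ⟨fun hc => hK.mem_of_emod_two_eq hc fun i => by fin_cases i <;> simp,
   fun hc => hK.mem_of_emod_two_eq hc fun i => by fin_cases i <;> simp⟩

lemma add_emod_two_mem (hK : IsParityLattice K) {u v : Fin 3 → ℤ} (hu : u ∈ K)
    (hv : v ∈ K) :
    ![(u 0 + v 0) % 2, (u 1 + v 1) % 2, (u 2 + v 2) % 2] ∈ K :=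
  (hK.mem_iff_emod_two_mem _).1 (add_mem hu hv)

lemma unit_vectors_not_mem (hK : IsParityLattice K) :
    ![1, 0, 0] ∉ K ∧ ![0, 1, 0] ∉ K ∧ ![0, 0, 1] ∉ K := by
  refine ⟨?_, ?_, ?_⟩
  · convert hK.single_not_mem 0 using 2; decide
  · convert hK.single_not_mem 1 using 2; decide
  · convert hK.single_not_mem 2 using 2; decide

lemma mem_iff_parity (hK : IsParityLattice K) (c : Fin 3 → ℤ) : c ∈ K ↔
    c 0 % 2 = 0 ∧ c 1 % 2 = 0 ∧ c 2 % 2 = 0 ∨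
    c 0 % 2 = 1 ∧ c 1 % 2 = 1 ∧ c 2 % 2 = 1 ∧ ![1, 1, 1] ∈ K ∨
    c 0 % 2 = 1 ∧ c 1 % 2 = 1 ∧ c 2 % 2 = 0 ∧ ![1, 1, 0] ∈ K ∨
    c 0 % 2 = 1 ∧ c 1 % 2 = 0 ∧ c 2 % 2 = 1 ∧ ![1, 0, 1] ∈ K ∨
    c 0 % 2 = 0 ∧ c 1 % 2 = 1 ∧ c 2 % 2 = 1 ∧ ![0, 1, 1] ∈ K := by
  have h000 : ![0, 0, 0] ∈ K := hK.mem_of_even _ (by decide)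
  obtain ⟨h100, h010, h001⟩ := hK.unit_vectors_not_mem
  rw [hK.mem_iff_emod_two_mem]
  rcases Int.emod_two_eq (c 0) with h0 | h0 <;> rcases Int.emod_two_eq (c 1) with h1 | h1 <;>
    rcases Int.emod_two_eq (c 2) with h2 | h2 <;> simp [h0, h1, h2, h000, h100, h010, h001]

theorem classification (hK : IsParityLattice K) :
    (∀ c, c ∈ K ↔ ∀ i, c i % 2 = 0) ∨
    (∀ c, c ∈ K ↔ ∀ i j, c i % 2 = c j % 2) ∨
    (∀ c, c ∈ K ↔ 2 ∣ c 0 + c 1 + c 2) ∨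
    (∀ c, c ∈ K ↔ c 0 % 2 = c 1 % 2 ∧ c 2 % 2 = 0) ∨
    (∀ c, c ∈ K ↔ c 1 % 2 = 0 ∧ c 0 % 2 = c 2 % 2) ∨
    (∀ c, c ∈ K ↔ c 0 % 2 = 0 ∧ c 1 % 2 = c 2 % 2) := by
  obtain ⟨h100, h010, h001⟩ := hK.unit_vectors_not_mem
  have hadd {u v : Fin 3 → ℤ} (hu : u ∈ K) (hv : v ∈ K) := hK.add_emod_two_mem hu hv
  simp only [Fin.forall_fin_succ, IsEmpty.forall_iff, Fin.succ_zero_eq_one, Fin.succ_one_eq_two,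
    and_true, true_and]
  by_cases h111 : ![1, 1, 1] ∈ K
  · have h110 : ![1, 1, 0] ∉ K := fun h => h001 (by simpa using hadd h111 h)
    have h101 : ![1, 0, 1] ∉ K := fun h => h010 (by simpa using hadd h111 h)
    have h011 : ![0, 1, 1] ∉ K := fun h => h100 (by simpa using hadd h111 h)
    refine .inr (.inl fun c => ?_)
    simp only [hK.mem_iff_parity c, h111, h110, h101, h011, and_true, and_false, or_false]
    omega
  by_cases h110 : ![1, 1, 0] ∈ K
  · by_cases h101 : ![1, 0, 1] ∈ K
    · have h011 : ![0, 1, 1] ∈ K := by simpa using hadd h110 h101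
      refine .inr (.inr (.inl fun c => ?_))
      simp only [hK.mem_iff_parity c, h111, h110, h101, h011, and_true, and_false, false_or]
      omega
    · have h011 : ![0, 1, 1] ∉ K := fun h => h101 (by simpa using hadd h110 h)
      refine .inr (.inr (.inr (.inl fun c => ?_)))
      simp only [hK.mem_iff_parity c, h111, h110, h101, h011, and_true, and_false, or_false,
        false_or]
      omega
  by_cases h101 : ![1, 0, 1] ∈ K
  · have h011 : ![0, 1, 1] ∉ K := fun h => h110 (by simpa using hadd h101 h)
    refine .inr (.inr (.inr (.inr (.inl fun c => ?_))))
    simp only [hK.mem_iff_parity c, h111, h110, h101, h011, and_true, and_false, or_false,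
      false_or]
    omega
  by_cases h011 : ![0, 1, 1] ∈ K
  · refine .inr (.inr (.inr (.inr (.inr fun c => ?_))))
    simp only [hK.mem_iff_parity c, h111, h110, h101, h011, and_true, and_false, false_or]
    omega
  · refine .inl fun c => ?_
    simp only [hK.mem_iff_parity c, h111, h110, h101, h011, and_false, or_false]

end IsParityLattice

def intPoints (P : (Fin 3 → ℤ) → Prop) : Set V3 :=
  {x | ∃ c : Fin 3 → ℤ, (∀ i, x i = c i) ∧ P c}

lemma intPoints_congr {P Q : (Fin 3 → ℤ) → Prop} (h : ∀ c, P c ↔ Q c) :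
    intPoints P = intPoints Q := by
  simp only [intPoints, h]

lemma preimage_diag_mul (d e : Fin 3 → ℝ) (S : Set V3) :
    (fun x : V3 => fun i => d i * e i * x i) ⁻¹' S =
      (fun x : V3 => fun i => e i * x i) ⁻¹' ((fun x : V3 => fun i => d i * x i) ⁻¹' S) := by
  ext x; simp [mul_assoc]

lemma preimage_diag_intPoints {e : Fin 3 → ℤ} (he : ∀ i, e i ≠ 0) {P : (Fin 3 → ℤ) → Prop}
    (hP : ∀ c, P c → ∀ i, e i ∣ c i) :
    (fun x : V3 => fun i => (e i : ℝ) * x i) ⁻¹' intPoints P =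
      intPoints fun c => P fun i => e i * c i := by
  ext x
  simp only [intPoints, Set.mem_preimage, Set.mem_ofPred_eq]
  constructor
  · rintro ⟨c, hc, hPc⟩
    choose m hm using hP c hPc
    refine ⟨m, fun i => ?_, by simpa [← hm] using hPc⟩
    have : (e i : ℝ) * x i = e i * m i := by rw [hc, hm]; push_cast; ring
    exact mul_left_cancel₀ (by exact_mod_cast he i) this
  · rintro ⟨m, hm, hPm⟩
    exact ⟨fun i => e i * m i, fun i => by simp [hm], hPm⟩

lemma cubicLattice_eq_intPoints : cubicLattice = intPoints fun _ => True := by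
  simp [cubicLattice, intPoints]

lemma latticeOf_eq_intPoints₁ :
    latticeOf ![1, 1, 0] ![1, -1, 0] ![0, 0, 1] = intPoints fun c => c 0 % 2 = c 1 % 2 := by
  ext x
  simp only [latticeOf, intPoints, Set.mem_ofPred_eq]
  constructor
  · rintro ⟨p, q, r, rfl⟩
    refine ⟨![p + q, p - q, r], fun i => ?_, by simp; omega⟩
    fin_cases i <;> simp [sub_eq_add_neg]
  · rintro ⟨c, hc, hp⟩
    refine ⟨(c 0 + c 1) / 2, (c 0 - c 1) / 2, c 2, funext fun i => ?_⟩
    fin_cases i <;> simp [hc] <;> norm_cast <;> omega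

lemma latticeOf_eq_intPoints₂ :
    latticeOf ![2, 0, 0] ![0, 2, 0] ![1, 0, 1] =
      intPoints fun c => c 1 % 2 = 0 ∧ c 0 % 2 = c 2 % 2 := by
  ext x
  simp only [latticeOf, intPoints, Set.mem_ofPred_eq]
  constructor
  · rintro ⟨p, q, r, rfl⟩
    refine ⟨![2 * p + r, 2 * q, r], fun i => ?_, by simp⟩
    fin_cases i <;> simp [mul_comm]
  · rintro ⟨c, hc, hp⟩
    refine ⟨(c 0 - c 2) / 2, c 1 / 2, c 2, funext fun i => ?_⟩
    fin_cases i <;> simp [hc] <;> norm_cast <;> omega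

lemma latticeOf_eq_intPoints₃ :
    latticeOf ![2, 0, 0] ![0, 2, 0] ![0, 1, 1] =
      intPoints fun c => c 0 % 2 = 0 ∧ c 1 % 2 = c 2 % 2 := by
  ext x
  simp only [latticeOf, intPoints, Set.mem_ofPred_eq]
  constructor
  · rintro ⟨p, q, r, rfl⟩
    refine ⟨![2 * p, 2 * q + r, r], fun i => ?_, by simp⟩
    fin_cases i <;> simp [mul_comm]
  · rintro ⟨c, hc, hp⟩
    refine ⟨c 0 / 2, (c 1 - c 2) / 2, c 2, funext fun i => ?_⟩
    fin_cases i <;> simp [hc] <;> norm_cast <;> omega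

lemma IsFullLattice.discreteTopology {L : AddSubgroup V3} (hL : IsFullLattice L) :
    DiscreteTopology L := by
  obtain ⟨b, hb⟩ := hL
  obtain rfl : L = (Submodule.span ℤ (Set.range b)).toAddSubgroup := by
    ext x
    simp_rw [hb, Submodule.mem_toAddSubgroup, Submodule.mem_span_range_iff_exists_fun,
      Int.cast_smul_eq_zsmul, eq_comm]
  infer_instance

lemma IsFullLattice.exists_mem_apply_ne_zero {L : AddSubgroup V3} (hL : IsFullLattice L)
    (i : Fin 3) : ∃ v ∈ L, v i ≠ 0 := by
  obtain ⟨b, hb⟩ := hL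
  by_contra! h
  have : LinearMap.proj (R := ℝ) (φ := fun _ : Fin 3 => ℝ) i = 0 :=
    b.ext fun k => h _ ((hb _).2 ⟨Pi.single k 1, by simp [Pi.single_apply]⟩)
  simpa using LinearMap.congr_fun this (Pi.single i 1)

lemma exists_zmultiples_eq_comap_single (L : AddSubgroup V3) [DiscreteTopology L]
    (i : Fin 3) :
    ∃ a : ℝ, AddSubgroup.zmultiples a = L.comap (AddMonoidHom.single _ i) := by
  have : DiscreteTopology (L.comap (AddMonoidHom.single (fun _ : Fin 3 => ℝ) i)) :=
    DiscreteTopology.preimage_of_continuous_injective (L : Set V3) (f := Pi.single i)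
      (continuous_single (A := fun _ : Fin 3 => ℝ) i) (Pi.single_injective i)
  rw [← AddSubgroup.isAddCyclic_iff_exists_zmultiples_eq_top]
  exact AddSubgroup.discrete_iff_addCyclic.mpr this

section AxisGenerators

variable {L : AddSubgroup V3}

lemma single_two_mul_mem (hσx : ∀ v ∈ L, ![-(v 0), v 1, v 2] ∈ L)
    (hσy : ∀ v ∈ L, ![v 0, -(v 1), v 2] ∈ L) {v : V3} (hv : v ∈ L) (i : Fin 3) :
    Pi.single i (2 * v i) ∈ L := by
  fin_cases i
  · convert sub_mem hv (hσx v hv) using 1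
    funext j; fin_cases j <;> simp; ring
  · convert sub_mem hv (hσy v hv) using 1
    funext j; fin_cases j <;> simp; ring
  · convert add_mem hv (hσy _ (hσx v hv)) using 1
    funext j; fin_cases j <;> simp; ring

lemma exists_axis_generators (hL : IsFullLattice L) (hσx : ∀ v ∈ L, ![-(v 0), v 1, v 2] ∈ L)
    (hσy : ∀ v ∈ L, ![v 0, -(v 1), v 2] ∈ L) :
    ∃ a : Fin 3 → ℝ, (∀ i, a i ≠ 0) ∧ ∀ i t, Pi.single i t ∈ L ↔ ∃ n : ℤ, n * a i = t := by
  have := hL.discreteTopology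
  choose a ha using exists_zmultiples_eq_comap_single L
  have hmem (i : Fin 3) (t : ℝ) : Pi.single i t ∈ L ↔ ∃ n : ℤ, n * a i = t := by
    change t ∈ L.comap (AddMonoidHom.single (fun _ : Fin 3 => ℝ) i) ↔ _
    simp [← ha i, AddSubgroup.mem_zmultiples_iff]
  refine ⟨a, fun i ha0 => ?_, hmem⟩
  obtain ⟨v, hv, hvi⟩ := hL.exists_mem_apply_ne_zero i
  obtain ⟨n, hn⟩ := (hmem i _).1 (single_two_mul_mem hσx hσy hv i)
  simp [ha0, hvi] at hn

def intDiag (d : Fin 3 → ℝ) : (Fin 3 → ℤ) →+ V3 where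
  toFun c i := d i * c i
  map_zero' := by funext i; simp
  map_add' c c' := by funext i; simp [mul_add]

variable {a : Fin 3 → ℝ}

lemma isParityLattice_comap_intDiag (ha : ∀ i, a i ≠ 0)
    (hax : ∀ i t, Pi.single i t ∈ L ↔ ∃ n : ℤ, n * a i = t) :
    IsParityLattice (L.comap (intDiag fun i => a i / 2)) := by
  have hM (m : Fin 3 → ℤ) : (fun i => (m i : ℝ) * a i) ∈ L := by
    rw [← Finset.univ_sum_single fun i => (m i : ℝ) * a i]
    exact sum_mem fun i _ => (hax i _).2 ⟨m i, rfl⟩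
  refine ⟨fun c hc => AddSubgroup.mem_comap.2 ?_, fun i hi => ?_⟩
  · convert hM fun i => c i / 2 using 1
    funext i
    have : c i = 2 * (c i / 2) := by have := hc i; omega
    replace : (c i : ℝ) = 2 * ((c i / 2 : ℤ) : ℝ) := by exact_mod_cast this
    simp only [intDiag, AddMonoidHom.coe_mk, ZeroHom.coe_mk, this]
    ring
  · have : intDiag (fun i => a i / 2) (Pi.single i 1) = Pi.single i (a i / 2) := by
      funext j; by_cases h : j = i <;> simp [intDiag, h]
    obtain ⟨n, hn⟩ := (hax i _).1 (this ▸ AddSubgroup.mem_comap.1 hi)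
    have : ((2 * n : ℤ) : ℝ) = 1 := by
      apply mul_right_cancel₀ (ha i); push_cast; linear_combination 2 * hn
    have : 2 * n = 1 := by exact_mod_cast this
    omega

lemma preimage_half_diag_eq_intPoints (hσx : ∀ v ∈ L, ![-(v 0), v 1, v 2] ∈ L)
    (hσy : ∀ v ∈ L, ![v 0, -(v 1), v 2] ∈ L) (ha : ∀ i, a i ≠ 0)
    (hax : ∀ i t, Pi.single i t ∈ L ↔ ∃ n : ℤ, n * a i = t) :
    (fun x : V3 => fun i => a i / 2 * x i) ⁻¹' L =
      intPoints (· ∈ L.comap (intDiag fun i => a i / 2)) := by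
  ext x
  simp only [Set.mem_preimage, SetLike.mem_coe, intPoints, Set.mem_ofPred_eq,
    AddSubgroup.mem_comap]
  constructor
  · intro hx
    have hint (i : Fin 3) : ∃ n : ℤ, x i = n := by
      obtain ⟨n, hn⟩ := (hax i _).1 (single_two_mul_mem hσx hσy hx i)
      exact ⟨n, mul_left_cancel₀ (ha i) (by linear_combination -hn)⟩
    choose c hc using hint
    refine ⟨c, hc, ?_⟩
    convert hx using 1
    funext i; simp [intDiag, hc]
  · rintro ⟨c, hc, hmem⟩
    convert hmem using 1
    funext i; simp [intDiag, hc]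

end AxisGenerators

def standardLattices : Set (Set V3) :=
  {cubicLattice, bccLattice, fccLattice,
    latticeOf ![1, 1, 0] ![1, -1, 0] ![0, 0, 1],
    latticeOf ![2, 0, 0] ![0, 2, 0] ![1, 0, 1],
    latticeOf ![2, 0, 0] ![0, 2, 0] ![0, 1, 1]}

lemma exists_diag_preimage_mem_standardLattices {S : Set V3} {d : Fin 3 → ℝ}
    (hd : ∀ i, d i ≠ 0) {K : AddSubgroup (Fin 3 → ℤ)} (hK : IsParityLattice K)
    (hS : (fun x : V3 => fun i => d i * x i) ⁻¹' S = intPoints (· ∈ K)) :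
    ∃ d' : Fin 3 → ℝ, (∀ i, d' i ≠ 0) ∧
      (fun x : V3 => fun i => d' i * x i) ⁻¹' S ∈ standardLattices := by
  simp only [standardLattices, Set.mem_insert_iff, Set.mem_singleton_iff]
  rcases hK.classification with h | h | h | h | h | h <;> rw [intPoints_congr h] at hS
  · refine ⟨fun i => d i * ((2 : ℤ) : ℝ), fun i => by simp [hd i], .inl ?_⟩
    rw [preimage_diag_mul, hS, preimage_diag_intPoints (e := fun _ => 2) (by simp)
      fun c hc i => Int.dvd_of_emod_eq_zero (hc i), cubicLattice_eq_intPoints]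
    exact intPoints_congr (by simp)
  · exact ⟨d, hd, .inr (.inl hS)⟩
  · exact ⟨d, hd, .inr (.inr (.inl hS))⟩
  · refine ⟨fun i => d i * ((![1, 1, 2] i : ℤ) : ℝ), fun i => ?_,
      .inr (.inr (.inr (.inl ?_)))⟩
    · fin_cases i <;> simp [hd]
    rw [preimage_diag_mul, hS,
      preimage_diag_intPoints (e := ![1, 1, 2]) (by decide) fun c hc i => ?_,
      latticeOf_eq_intPoints₁]
    · exact intPoints_congr (by simp)
    · fin_cases i <;> simp [Int.dvd_of_emod_eq_zero hc.2]
  · exact ⟨d, hd, .inr (.inr (.inr (.inr (.inl (hS.trans latticeOf_eq_intPoints₂.symm)))))⟩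
  · exact ⟨d, hd, .inr (.inr (.inr (.inr (.inr (hS.trans latticeOf_eq_intPoints₃.symm)))))⟩

/-- A full-rank lattice in `ℝ³` preserved by the reflections in the planes
`x = 0` and `y = 0` (the group `D̃₂`) is the image under some invertible diagonal linear map
of one of six explicit lattices. -/
theorem statement10 (L : AddSubgroup V3) (hL : IsFullLattice L)
    (hx : (fun x : V3 => ![-(x 0), x 1, x 2]) '' (L : Set V3) = (L : Set V3))
    (hy : (fun x : V3 => ![x 0, -(x 1), x 2]) '' (L : Set V3) = (L : Set V3)) :
    ∃ d : Fin 3 → ℝ, (∀ i, d i ≠ 0) ∧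
      ((fun x : V3 => fun i => d i * x i) ⁻¹' (L : Set V3)) ∈
        ({cubicLattice, bccLattice, fccLattice,
          latticeOf ![1, 1, 0] ![1, -1, 0] ![0, 0, 1],
          latticeOf ![2, 0, 0] ![0, 2, 0] ![1, 0, 1],
          latticeOf ![2, 0, 0] ![0, 2, 0] ![0, 1, 1]} : Set (Set V3)) := by
  have hσx : ∀ v ∈ L, ![-(v 0), v 1, v 2] ∈ L := fun v hv => hx.subset ⟨v, hv, rfl⟩
  have hσy : ∀ v ∈ L, ![v 0, -(v 1), v 2] ∈ L := fun v hv => hy.subset ⟨v, hv, rfl⟩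
  obtain ⟨a, ha, hax⟩ := exists_axis_generators hL hσx hσy
  exact exists_diag_preimage_mem_standardLattices (fun i => div_ne_zero (ha i) two_ne_zero)
    (isParityLattice_comap_intDiag ha hax) (preimage_half_diag_eq_intPoints hσx hσy ha hax)

end
end

section
/- Let L be a full-rank lattice in ℝ³ that is preserved by the group D̃₄ generated by the reflection in the plane x = 0 and the reflection in the plane x = y. Then there exist positive real numbers a, b such that, for the diagonal linear map D = diag(a, a, b), the lattice D⁻¹(L) is one of: Λ₍₁,₀,₀₎ = ℤ³; Λ₍₁,₁,₁₎ (body-centred cubic); Λ₍₁,₁,₀₎ (face-centred cubic); or the lattice ℤ(1,1,0) + ℤ(1,−1,0) + ℤ(0,0,1). -/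
noncomputable section

/-!
Let `α` and `γ` be the positive generators of the discrete subgroups in which `L` meets the
`x`- and `z`-axes. For `v ∈ L` the vectors `v - σₓ v = (2v₀, 0, 0)` and `v + σₓσ_y v = (0, 0, 2v₂)`
lie on these axes, and the swap `x ↔ y` carries the `x`-axis to the `y`-axis, so
`αℤ × αℤ × γℤ ⊆ L ⊆ (α/2)ℤ × (α/2)ℤ × (γ/2)ℤ`. Thus `L` is determined by the set of parity
classes of its points in the half-period coordinates: a subgroup of `(ℤ/2)³` invariant under the
swap and, by the minimality of `α` and `γ`, containing no coordinate vector. There are exactly four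
such subgroups, `0`, `⟨(1,1,1)⟩`, the even-weight vectors and `⟨(1,1,0)⟩`, and rescaling turns
them into the four lattices of the statement.
-/

lemma AddSubgroup.exists_pos_eq_zmultiples (A : AddSubgroup ℝ) [DiscreteTopology A]
    (hA : A ≠ ⊥) : ∃ α : ℝ, 0 < α ∧ A = AddSubgroup.zmultiples α := by
  obtain ⟨g, rfl⟩ := A.isAddCyclic_iff_exists_zmultiples_eq_top.mp
    (AddSubgroup.discrete_iff_addCyclic.mpr ‹_›)
  exact ⟨|g|, abs_pos.mpr (mt AddSubgroup.zmultiples_eq_bot.mpr hA), (zmultiples_abs g).symm⟩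

lemma AddSubgroup.exists_pos_smul_mem_iff {E : Type*} [AddCommGroup E] [Module ℝ E]
    [TopologicalSpace E] [ContinuousSMul ℝ E] (L : AddSubgroup E) [DiscreteTopology L] {e : E}
    (he : e ≠ 0) {t₀ : ℝ} (ht₀ : t₀ ≠ 0) (h : t₀ • e ∈ L) :
    ∃ α : ℝ, 0 < α ∧ ∀ t : ℝ, t • e ∈ L ↔ ∃ k : ℤ, t = k * α := by
  let A := L.comap (LinearMap.toSpanSingleton ℝ E e).toAddMonoidHom
  have : DiscreteTopology A := DiscreteTopology.preimage_of_continuous_injective (L : Set E)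
    (continuous_id.smul continuous_const) (smul_left_injective ℝ he)
  have hA0 : A ≠ ⊥ := AddSubgroup.ne_bot_iff_exists_ne_zero.mpr
    ⟨⟨t₀, h⟩, by simpa [← Subtype.coe_ne_coe] using ht₀⟩
  obtain ⟨α, hα, hA⟩ := A.exists_pos_eq_zmultiples hA0
  refine ⟨α, hα, fun t => ?_⟩
  simpa [A, AddSubgroup.mem_zmultiples_iff, eq_comm] using SetLike.ext_iff.mp hA t

def diagScale (a b : ℝ) (x : V3) : V3 := ![a * x 0, a * x 1, b * x 2]

def gridSet (a b : ℝ) (T : ℤ → ℤ → ℤ → Prop) : Set V3 :=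
  {v | ∃ m n k : ℤ, T m n k ∧ v = ![a * m, a * n, b * k]}

section gridSet

variable {a b : ℝ} {T : ℤ → ℤ → ℤ → Prop}

lemma gridSet_two_mul_left (hT : ∀ m n k, T m n k → 2 ∣ m ∧ 2 ∣ n) :
    gridSet a b T = gridSet (2 * a) b (fun m n k => T (2 * m) (2 * n) k) := by
  ext v
  constructor
  · rintro ⟨m, n, k, h, rfl⟩
    obtain ⟨⟨m, rfl⟩, ⟨n, rfl⟩⟩ := hT _ _ _ h
    exact ⟨m, n, k, h, by push_cast; ring_nf⟩
  · rintro ⟨m, n, k, h, rfl⟩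
    exact ⟨2 * m, 2 * n, k, h, by push_cast; ring_nf⟩

lemma gridSet_two_mul_right (hT : ∀ m n k, T m n k → 2 ∣ k) :
    gridSet a b T = gridSet a (2 * b) (fun m n k => T m n (2 * k)) := by
  ext v
  constructor
  · rintro ⟨m, n, k, h, rfl⟩
    obtain ⟨k, rfl⟩ := hT _ _ _ h
    exact ⟨m, n, k, h, by push_cast; ring_nf⟩
  · rintro ⟨m, n, k, h, rfl⟩
    exact ⟨m, n, 2 * k, h, by push_cast; ring_nf⟩

lemma preimage_diagScale_eq (ha : a ≠ 0) (hb : b ≠ 0) :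
    diagScale a b ⁻¹' gridSet a b T =
      {x : V3 | ∃ c : Fin 3 → ℤ, (∀ i, x i = c i) ∧ T (c 0) (c 1) (c 2)} := by
  ext x
  simp only [diagScale, gridSet, Set.mem_preimage, Set.mem_ofPred_eq]
  constructor
  · rintro ⟨m, n, k, h, hx⟩
    refine ⟨![m, n, k], fun i => ?_, h⟩
    have := congrFun hx i
    fin_cases i <;> simpa [ha, hb] using this
  · rintro ⟨c, hc, h⟩
    exact ⟨c 0, c 1, c 2, h, by simp [hc]⟩

end gridSet

/-- The parity pattern of a lattice in half-period coordinates: `T m n k` says that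
`(a m, a n, b k)` lies in the lattice, where `2a` and `2b` are its periods along the `x`- and
`z`-axes. -/
structure IsCentering (T : ℤ → ℤ → ℤ → Prop) : Prop where
  sub {m n k m' n' k' : ℤ} : T m n k → T m' n' k' → T (m - m') (n - n') (k - k')
  even (m n k : ℤ) : T (2 * m) (2 * n) (2 * k)
  swap {m n k : ℤ} : T m n k → T n m k
  not_one_zero_zero : ¬ T 1 0 0
  not_zero_zero_one : ¬ T 0 0 1

namespace IsCentering

variable {T T' : ℤ → ℤ → ℤ → Prop}

lemma zero_zero_zero (hT : IsCentering T) : T 0 0 0 := by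
  simpa using hT.even 0 0 0

lemma not_zero_one_zero (hT : IsCentering T) : ¬ T 0 1 0 :=
  fun h => hT.not_one_zero_zero (hT.swap h)

lemma zero_one_one_iff (hT : IsCentering T) : T 0 1 1 ↔ T 1 0 1 :=
  ⟨hT.swap, hT.swap⟩

lemma add (hT : IsCentering T) {m n k m' n' k' : ℤ} (h : T m n k) (h' : T m' n' k') :
    T (m + m') (n + n') (k + k') := by
  simpa using hT.sub h (hT.sub hT.zero_zero_zero h')

lemma iff_emod_two (hT : IsCentering T) (m n k : ℤ) : T m n k ↔ T (m % 2) (n % 2) (k % 2) := by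
  constructor
  · intro h
    simpa [Int.emod_def] using hT.sub h (hT.even (m / 2) (n / 2) (k / 2))
  · intro h
    simpa [Int.emod_def] using hT.add h (hT.even (m / 2) (n / 2) (k / 2))

lemma ext (hT : IsCentering T) (hT' : IsCentering T') (h110 : T 1 1 0 ↔ T' 1 1 0)
    (h101 : T 1 0 1 ↔ T' 1 0 1) (h111 : T 1 1 1 ↔ T' 1 1 1) : T = T' := by
  funext m n k
  rw [hT.iff_emod_two, hT'.iff_emod_two]
  rcases Int.emod_two_eq_zero_or_one m with hm | hm <;>
  rcases Int.emod_two_eq_zero_or_one n with hn | hn <;>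
  rcases Int.emod_two_eq_zero_or_one k with hk | hk <;>
  simp [hm, hn, hk, hT.zero_zero_zero, hT'.zero_zero_zero, hT.not_one_zero_zero,
    hT'.not_one_zero_zero, hT.not_zero_one_zero, hT'.not_zero_one_zero, hT.not_zero_zero_one,
    hT'.not_zero_zero_one, hT.zero_one_one_iff, hT'.zero_one_one_iff, h110, h101, h111]

lemma eq_or_eq_or_eq_or_eq (hT : IsCentering T) :
    T = (fun m n k => 2 ∣ m ∧ 2 ∣ n ∧ 2 ∣ k) ∨
    T = (fun m n k => m % 2 = n % 2 ∧ n % 2 = k % 2) ∨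
    T = (fun m n k => 2 ∣ m + n + k) ∨
    T = (fun m n k => 2 ∣ m + n ∧ 2 ∣ k) := by
  by_cases h111 : T 1 1 1
  · have h110 : ¬ T 1 1 0 := fun h => hT.not_zero_zero_one (by simpa using hT.sub h111 h)
    have h101 : ¬ T 1 0 1 := fun h => hT.not_zero_one_zero (by simpa using hT.sub h111 h)
    refine Or.inr (Or.inl (hT.ext ⟨fun _ _ => by omega, fun _ _ _ => by omega,
      fun _ => by omega, by omega, by omega⟩ ?_ ?_ ?_)) <;> norm_num [h110, h101, h111]
  by_cases h101 : T 1 0 1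
  · have h110 : T 1 1 0 := by
      simpa [hT.iff_emod_two 1 (-1) 0] using hT.sub h101 (hT.swap h101)
    refine Or.inr (Or.inr (Or.inl (hT.ext ⟨fun _ _ => by omega, fun _ _ _ => by omega,
      fun _ => by omega, by omega, by omega⟩ ?_ ?_ ?_))) <;> norm_num [h110, h101, h111]
  by_cases h110 : T 1 1 0
  · refine Or.inr (Or.inr (Or.inr (hT.ext ⟨fun _ _ => by omega, fun _ _ _ => by omega,
      fun _ => by omega, by omega, by omega⟩ ?_ ?_ ?_))) <;> norm_num [h110, h101, h111]
  · refine Or.inl (hT.ext ⟨fun _ _ => by omega, fun _ _ _ => by omega,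
      fun _ => by omega, by omega, by omega⟩ ?_ ?_ ?_) <;> norm_num [h110, h101, h111]

end IsCentering

lemma div_two_ne_intCast_mul {α : ℝ} (hα : α ≠ 0) (k : ℤ) : α / 2 ≠ k * α := by
  intro h
  have : ((2 * k : ℤ) : ℝ) = 1 := by
    push_cast
    field_simp at h
    linarith
  norm_cast at this
  omega

section Invariant

variable {L : AddSubgroup V3}

lemma two_mul_apply_zero_mem (hX : ∀ v ∈ L, ![-(v 0), v 1, v 2] ∈ L) {v : V3} (hv : v ∈ L) :
    ![2 * v 0, 0, 0] ∈ L := by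
  convert sub_mem hv (hX v hv) using 1
  ext i; fin_cases i <;> simp; ring

lemma two_mul_apply_two_mem (hX : ∀ v ∈ L, ![-(v 0), v 1, v 2] ∈ L)
    (hS : ∀ v ∈ L, ![v 1, v 0, v 2] ∈ L) {v : V3} (hv : v ∈ L) : ![0, 0, 2 * v 2] ∈ L := by
  convert add_mem hv (hS _ (hX _ (hS _ (hX v hv)))) using 1
  ext i; fin_cases i <;> simp; ring

variable {α γ : ℝ}

lemma isCentering_of_axes (hα : ∀ t : ℝ, ![t, 0, 0] ∈ L ↔ ∃ k : ℤ, t = k * α)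
    (hγ : ∀ t : ℝ, ![0, 0, t] ∈ L ↔ ∃ k : ℤ, t = k * γ) (hS : ∀ v ∈ L, ![v 1, v 0, v 2] ∈ L)
    (hα0 : α ≠ 0) (hγ0 : γ ≠ 0) :
    IsCentering (fun m n k => ![α / 2 * m, α / 2 * n, γ / 2 * k] ∈ L) where
  sub h h' := by
    convert sub_mem h h' using 1
    ext i; fin_cases i <;> simp <;> ring
  even m n k := by
    have hm := (hα (m * α)).mpr ⟨m, rfl⟩
    have hn := hS _ ((hα (n * α)).mpr ⟨n, rfl⟩)
    have hk := (hγ (k * γ)).mpr ⟨k, rfl⟩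
    convert add_mem (add_mem hm hn) hk using 1
    ext i; fin_cases i <;> simp <;> ring
  swap h := hS _ h
  not_one_zero_zero h := by
    obtain ⟨k, hk⟩ := (hα _).mp (by simpa using h)
    exact div_two_ne_intCast_mul hα0 k hk
  not_zero_zero_one h := by
    obtain ⟨k, hk⟩ := (hγ _).mp (by simpa using h)
    exact div_two_ne_intCast_mul hγ0 k hk

lemma coe_eq_gridSet_of_axes (hα : ∀ t : ℝ, ![t, 0, 0] ∈ L ↔ ∃ k : ℤ, t = k * α)
    (hγ : ∀ t : ℝ, ![0, 0, t] ∈ L ↔ ∃ k : ℤ, t = k * γ) (hX : ∀ v ∈ L, ![-(v 0), v 1, v 2] ∈ L)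
    (hS : ∀ v ∈ L, ![v 1, v 0, v 2] ∈ L) :
    (L : Set V3) =
      gridSet (α / 2) (γ / 2) (fun m n k => ![α / 2 * m, α / 2 * n, γ / 2 * k] ∈ L) := by
  ext v
  constructor
  · intro hv
    obtain ⟨m, hm⟩ := (hα _).mp (two_mul_apply_zero_mem hX hv)
    obtain ⟨n, hn⟩ := (hα _).mp (by simpa using two_mul_apply_zero_mem hX (hS v hv))
    obtain ⟨k, hk⟩ := (hγ _).mp (two_mul_apply_two_mem hX hS hv)
    obtain rfl : v = ![α / 2 * m, α / 2 * n, γ / 2 * k] := by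
      ext i; fin_cases i <;> simp <;> linarith
    exact ⟨m, n, k, hv, rfl⟩
  · rintro ⟨m, n, k, h, rfl⟩
    exact h

end Invariant

theorem exists_isCentering_coe_eq_gridSet {L : AddSubgroup V3} (hL : IsFullLattice L)
    (hX : ∀ v ∈ L, ![-(v 0), v 1, v 2] ∈ L) (hS : ∀ v ∈ L, ![v 1, v 0, v 2] ∈ L) :
    ∃ a b : ℝ, 0 < a ∧ 0 < b ∧ ∃ T, IsCentering T ∧ (L : Set V3) = gridSet a b T := by
  have := hL.discreteTopology
  obtain ⟨u, hu, hu0⟩ := hL.exists_mem_apply_ne_zero 0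
  obtain ⟨w, hw, hw2⟩ := hL.exists_mem_apply_ne_zero 2
  obtain ⟨α, hα, hαL⟩ := L.exists_pos_smul_mem_iff (e := ![1, 0, 0]) (by simp)
    (mul_ne_zero two_ne_zero hu0) (by simpa using two_mul_apply_zero_mem hX hu)
  obtain ⟨γ, hγ, hγL⟩ := L.exists_pos_smul_mem_iff (e := ![0, 0, 1]) (by simp)
    (mul_ne_zero two_ne_zero hw2) (by simpa using two_mul_apply_two_mem hX hS hw)
  simp only [Matrix.smul_cons, smul_eq_mul, mul_one, mul_zero, Matrix.smul_empty] at hαL hγL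
  exact ⟨α / 2, γ / 2, by positivity, by positivity, _,
    isCentering_of_axes hαL hγL hS hα.ne' hγ.ne', coe_eq_gridSet_of_axes hαL hγL hX hS⟩

lemma latticeOf_eq :
    latticeOf ![1, 1, 0] ![1, -1, 0] ![0, 0, 1] =
      {x : V3 | ∃ c : Fin 3 → ℤ, (∀ i, x i = c i) ∧ 2 ∣ c 0 + c 1} := by
  ext x
  constructor
  · rintro ⟨p, q, r, rfl⟩
    refine ⟨![p + q, p - q, r], fun i => ?_, ⟨p, by simp; ring⟩⟩
    fin_cases i <;> simp [sub_eq_add_neg]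
  · rintro ⟨c, hc, t, ht⟩
    have ht' : (c 0 : ℝ) + c 1 = 2 * t := by exact_mod_cast ht
    refine ⟨t, c 0 - t, c 2, ?_⟩
    ext i; fin_cases i <;> simp [hc]; linarith

variable {a b : ℝ}

lemma preimage_diagScale_eq_cubicLattice (ha : a ≠ 0) (hb : b ≠ 0) :
    diagScale (2 * a) (2 * b) ⁻¹' gridSet a b (fun m n k => 2 ∣ m ∧ 2 ∣ n ∧ 2 ∣ k) =
      cubicLattice := by
  rw [gridSet_two_mul_left (fun _ _ _ h => ⟨h.1, h.2.1⟩),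
    gridSet_two_mul_right (fun _ _ _ h => h.2.2),
    preimage_diagScale_eq (mul_ne_zero two_ne_zero ha) (mul_ne_zero two_ne_zero hb)]
  simp [cubicLattice]

lemma preimage_diagScale_eq_bccLattice (ha : a ≠ 0) (hb : b ≠ 0) :
    diagScale a b ⁻¹' gridSet a b (fun m n k => m % 2 = n % 2 ∧ n % 2 = k % 2) =
      bccLattice := by
  rw [preimage_diagScale_eq ha hb]
  refine Set.ext fun x => exists_congr fun c => and_congr_right fun _ =>
    ⟨?_, fun h => ⟨h 0 1, h 1 2⟩⟩
  rintro ⟨h01, h12⟩ i j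
  fin_cases i <;> fin_cases j <;> simp <;> omega

lemma preimage_diagScale_eq_fccLattice (ha : a ≠ 0) (hb : b ≠ 0) :
    diagScale a b ⁻¹' gridSet a b (fun m n k => 2 ∣ m + n + k) = fccLattice :=
  preimage_diagScale_eq ha hb

lemma preimage_diagScale_eq_latticeOf (ha : a ≠ 0) (hb : b ≠ 0) :
    diagScale a (2 * b) ⁻¹' gridSet a b (fun m n k => 2 ∣ m + n ∧ 2 ∣ k) =
      latticeOf ![1, 1, 0] ![1, -1, 0] ![0, 0, 1] := by
  rw [gridSet_two_mul_right (fun _ _ _ h => h.2),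
    preimage_diagScale_eq ha (mul_ne_zero two_ne_zero hb), latticeOf_eq]
  simp

/-- A full-rank lattice in `ℝ³` preserved by the group `D̃₄` generated by
the reflections in the planes `x = 0` and `x = y` is the image under a diagonal map
`D = diag(a, a, b)` (with `a, b > 0`) of one of four explicit lattices. -/
theorem statement11 (L : AddSubgroup V3) (hL : IsFullLattice L)
    (hx : (fun x : V3 => ![-(x 0), x 1, x 2]) '' (L : Set V3) = (L : Set V3))
    (hxy : (fun x : V3 => ![x 1, x 0, x 2]) '' (L : Set V3) = (L : Set V3)) :
    ∃ a b : ℝ, 0 < a ∧ 0 < b ∧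
      ((fun x : V3 => ![a * x 0, a * x 1, b * x 2]) ⁻¹' (L : Set V3)) ∈
        ({cubicLattice, bccLattice, fccLattice,
          latticeOf ![1, 1, 0] ![1, -1, 0] ![0, 0, 1]} : Set (Set V3)) := by
  obtain ⟨a, b, ha, hb, T, hT, hLT⟩ := exists_isCentering_coe_eq_gridSet hL
    (fun v hv => hx.subset (Set.mem_image_of_mem _ hv))
    (fun v hv => hxy.subset (Set.mem_image_of_mem _ hv))
  simp only [hLT, Set.mem_insert_iff, Set.mem_singleton_iff]
  rcases hT.eq_or_eq_or_eq_or_eq with rfl | rfl | rfl | rfl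
  · exact ⟨2 * a, 2 * b, by positivity, by positivity,
      Or.inl (preimage_diagScale_eq_cubicLattice ha.ne' hb.ne')⟩
  · exact ⟨a, b, ha, hb, Or.inr (Or.inl (preimage_diagScale_eq_bccLattice ha.ne' hb.ne'))⟩
  · exact ⟨a, b, ha, hb,
      Or.inr (Or.inr (Or.inl (preimage_diagScale_eq_fccLattice ha.ne' hb.ne')))⟩
  · exact ⟨a, 2 * b, ha, by positivity,
      Or.inr (Or.inr (Or.inr (preimage_diagScale_eq_latticeOf ha.ne' hb.ne')))⟩

end
end
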